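/- arXiv:2110.13725 — 3 statements merged into one kernel-verified Lean document; each statement's English description precedes it below -/
import Mathlib

section
/- Let K:ℝ→[0,∞) be a measurable function with ∫_ℝ K(u)du = 1, K(−u) = K(u) for all u∈ℝ, and K^{(2)} = ∫_ℝ u²K(u)du < ∞. Then the 4×4 matrix κ(K) is invertible. -/
open MeasureTheory

noncomputable section

/-- `a`-th moment of the kernel: `K^{(a)} = ∫ u^a K(u) du`. -/
def kmom (K : ℝ → ℝ) (a : ℕ) : ℝ := ∫ u, u ^ a * K u

/-- One-sided moment `K_+^{(a)} = ∫_0^∞ u^a K(u) du`. -/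
def kmomP (K : ℝ → ℝ) (a : ℕ) : ℝ := ∫ u in Set.Ioi (0 : ℝ), u ^ a * K u

/-- The 4×4 kernel matrix κ(K). -/
def kappa (K : ℝ → ℝ) : Matrix (Fin 4) (Fin 4) ℝ :=
  !![kmom K 0, kmomP K 0, kmom K 1, kmomP K 1;
     kmomP K 0, kmomP K 0, kmomP K 1, kmomP K 1;
     kmom K 1, kmomP K 1, kmom K 2, kmomP K 2;
     kmomP K 1, kmomP K 1, kmomP K 2, kmomP K 2]

/-- for every symmetric nonnegative kernel integrating to one whose
second moment is finite, the matrix κ(K) is invertible. -/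
theorem kappa_invertible (K : ℝ → ℝ) (hKmeas : Measurable K)
    (hKnonneg : ∀ u, 0 ≤ K u) (hKsymm : ∀ u, K (-u) = K u)
    (hKint : ∀ a : ℕ, a ≤ 2 → Integrable (fun u => u ^ a * K u))
    (hKone : (∫ u, K u) = 1) :
    IsUnit (kappa K) := by
  have hK0 : Integrable K := by simpa using hKint 0 (by norm_num)
  have hK1 : Integrable (fun u => u * K u) := by simpa using hKint 1 (by norm_num)
  have hK2 : Integrable (fun u => u ^ 2 * K u) := hKint 2 le_rfl
  -- half integral lemma for even functions
  have half : ∀ g : ℝ → ℝ, Integrable g → (∀ u, g (-u) = g u) →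
      (∫ u in Set.Ioi (0 : ℝ), g u) = (∫ u, g u) / 2 := by
    intro g hg hs
    have h1 : (∫ u in Set.Ioi (0 : ℝ), g u) = ∫ u in Set.Iic (0 : ℝ), g u := by
      have := integral_comp_neg_Ioi (0 : ℝ) g
      simp only [hs, neg_zero] at this
      exact this
    have h2 : (∫ u in Set.Iic (0 : ℝ), g u) + ∫ u in Set.Ioi (0 : ℝ), g u = ∫ u, g u :=
      intervalIntegral.integral_Iic_add_Ioi hg.integrableOn hg.integrableOn
    linarith
  have hA : kmom K 0 = 1 := by simpa [kmom] using hKone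
  have hB : kmomP K 0 = 1 / 2 := by
    have := half K hK0 hKsymm
    simpa [kmomP, hKone] using this
  have hC : kmom K 1 = 0 := by
    have h := integral_neg_eq_self (fun u => u * K u) (volume : Measure ℝ)
    simp only [hKsymm, neg_mul] at h
    rw [integral_neg] at h
    have : kmom K 1 = ∫ u, u * K u := by simp [kmom]
    rw [this]
    linarith
  set E := kmom K 2 with hEdef
  have hF : kmomP K 2 = E / 2 := by
    have := half (fun u => u ^ 2 * K u) hK2 (fun u => by simp [hKsymm])
    simpa [kmomP, kmom, hEdef] using this
  set D := kmomP K 1 with hDdef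
  have hD1 : D = ∫ u in Set.Ioi (0 : ℝ), u * K u := by
    simp [hDdef, kmomP]
  -- key strict inequality via ∫ (u - 2D)² K on Ioi 0
  set c : ℝ := 2 * D with hc
  have hint2 : IntegrableOn (fun u => u ^ 2 * K u) (Set.Ioi (0:ℝ)) := hK2.integrableOn
  have hint1 : IntegrableOn (fun u => (2 * c) * (u * K u)) (Set.Ioi (0:ℝ)) :=
    (hK1.integrableOn).const_mul _
  have hint0 : IntegrableOn (fun u => c ^ 2 * K u) (Set.Ioi (0:ℝ)) :=
    (hK0.integrableOn).const_mul _
  have hval : (∫ u in Set.Ioi (0 : ℝ), (u - c) ^ 2 * K u) = E / 2 - 2 * D ^ 2 := by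
    have hfun : (fun u => (u - c) ^ 2 * K u)
        = fun u => (u ^ 2 * K u - (2 * c) * (u * K u)) + c ^ 2 * K u := by
      funext u; ring
    have hsub : IntegrableOn (fun u => u ^ 2 * K u - (2 * c) * (u * K u)) (Set.Ioi (0:ℝ)) :=
      hint2.sub hint1
    rw [hfun, integral_add hsub hint0, integral_sub hint2 hint1,
      integral_const_mul, integral_const_mul]
    have h2 : (∫ u in Set.Ioi (0 : ℝ), u ^ 2 * K u) = E / 2 := hF
    have h1 : (∫ u in Set.Ioi (0 : ℝ), u * K u) = D := hD1.symm
    have h0 : (∫ u in Set.Ioi (0 : ℝ), K u) = 1 / 2 := by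
      have := hB; simpa [kmomP] using this
    rw [h2, h1, h0, hc]; ring
  have hnn : 0 ≤ᵐ[volume.restrict (Set.Ioi (0:ℝ))] fun u => (u - c) ^ 2 * K u :=
    Filter.Eventually.of_forall fun u => mul_nonneg (sq_nonneg _) (hKnonneg u)
  have hintq : IntegrableOn (fun u => (u - c) ^ 2 * K u) (Set.Ioi (0:ℝ)) := by
    have hfun : (fun u => (u - c) ^ 2 * K u)
        = fun u => (u ^ 2 * K u - (2 * c) * (u * K u)) + c ^ 2 * K u := by
      funext u; ring
    rw [hfun]; exact (hint2.sub hint1).add hint0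
  have hqnn : 0 ≤ ∫ u in Set.Ioi (0 : ℝ), (u - c) ^ 2 * K u :=
    integral_nonneg_of_ae hnn
  have hpos : 0 < E / 2 - 2 * D ^ 2 := by
    rcases lt_or_eq_of_le hqnn with h | h
    · linarith [hval ▸ h]
    · exfalso
      have hzero : (fun u => (u - c) ^ 2 * K u) =ᵐ[volume.restrict (Set.Ioi (0:ℝ))] 0 :=
        (integral_eq_zero_iff_of_nonneg_ae hnn hintq).1 h.symm
      have hne : ∀ᵐ u ∂(volume.restrict (Set.Ioi (0:ℝ))), u ≠ c := by
        refine ae_restrict_of_ae ?_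
        have : volume ({c} : Set ℝ) = 0 := measure_singleton c
        rw [ae_iff]
        simpa using this
      have hKz : K =ᵐ[volume.restrict (Set.Ioi (0:ℝ))] 0 := by
        filter_upwards [hzero, hne] with u h1 h2
        have hsq : (u - c) ^ 2 ≠ 0 := pow_ne_zero _ (sub_ne_zero.2 h2)
        have := mul_eq_zero.1 h1
        tauto
      have : (∫ u in Set.Ioi (0 : ℝ), K u) = 0 := integral_eq_zero_of_ae hKz
      have hB' : (∫ u in Set.Ioi (0 : ℝ), K u) = 1 / 2 := by
        have := hB; simpa [kmomP] using this
      linarith [hB' ▸ this]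
  have hdet : (kappa K).det = (E / 4 - D ^ 2) ^ 2 := by
    rw [show kappa K = !![(1:ℝ), 1/2, 0, D; 1/2, 1/2, D, D; 0, D, E, E/2; D, D, E/2, E/2] by
      rw [kappa, hA, hB, hC, hF]]
    simp [Matrix.det_succ_row_zero, Fin.sum_univ_succ, Fin.succAbove]
    ring
  have hdetne : (kappa K).det ≠ 0 := by
    rw [hdet]
    have : E / 4 - D ^ 2 > 0 := by linarith
    positivity
  exact (Matrix.isUnit_iff_isUnit_det _).2 (isUnit_iff_ne_zero.2 hdetne)

end
end

section
/- Let K:ℝ→[0,∞) be measurable and symmetric (K(−u) = K(u)) with ∫K = 1 and K^{(4)} < ∞, and suppose κ(K) is invertible. Then 2(K_+^{(1)})² < K_+^{(2)}, and κ(K)^{−1} = (1/((K_+^{(1)})² − (1/2)K_+^{(2)}))·M, where M is the 4×4 matrix with rows (−K_+^{(2)}, K_+^{(2)}, −K_+^{(1)}, K_+^{(1)}), (K_+^{(2)}, −2K_+^{(2)}, K_+^{(1)}, 0), (−K_+^{(1)}, K_+^{(1)}, −1/2, 1/2), (K_+^{(1)}, 0, 1/2, −1). Moreover, with a₂ = (K_+^{(3)}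 − 2K_+^{(1)}K_+^{(2)})/(K_+^{(2)} − 2(K_+^{(1)})²) and a₁ = (2(K_+^{(2)})² − 2K_+^{(1)}K_+^{(3)})/(K_+^{(2)} − 2(K_+^{(1)})²), one has κ(K)^{−1}·A = B, where A is the 4×4 matrix with rows (0, K_+^{(1)}, 2K_+^{(2)}, K_+^{(2)}), (K_+^{(1)}, K_+^{(1)}, K_+^{(2)}, K_+^{(2)}), (2K_+^{(2)}, K_+^{(2)}, 0, K_+^{(3)}), (K_+^{(2)}, K_+^{(2)}, K_+^{(3)}, K_+^{(3)}) and B is the 4×4 matrix with rows (0,0,a₁,0), (0,0,0,a₁), (1,0,−a₂,0), (0,1,2a₂,a₂). -/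
open MeasureTheory

noncomputable section

set_option maxHeartbeats 1000000 in
/-- explicit formula for κ(K)⁻¹ and the product identity κ(K)⁻¹ A = B,
for a symmetric nonnegative kernel with unit mass, finite fourth moment and κ(K) invertible. -/
theorem kappa_inverse_formula (K : ℝ → ℝ) (hKmeas : Measurable K)
    (hKnonneg : ∀ u, 0 ≤ K u) (hKsymm : ∀ u, K (-u) = K u)
    (hKint : ∀ a : ℕ, a ≤ 4 → Integrable (fun u => u ^ a * K u))
    (hKone : (∫ u, K u) = 1)
    (hinv : IsUnit (kappa K)) :
    2 * (kmomP K 1) ^ 2 < kmomP K 2 ∧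
    (kappa K)⁻¹ = (1 / ((kmomP K 1) ^ 2 - (1 / 2) * kmomP K 2)) •
      !![-(kmomP K 2), kmomP K 2, -(kmomP K 1), kmomP K 1;
         kmomP K 2, -2 * kmomP K 2, kmomP K 1, 0;
         -(kmomP K 1), kmomP K 1, -(1 / 2), 1 / 2;
         kmomP K 1, 0, 1 / 2, -1] ∧
    (kappa K)⁻¹ *
      !![0, kmomP K 1, 2 * kmomP K 2, kmomP K 2;
         kmomP K 1, kmomP K 1, kmomP K 2, kmomP K 2;
         2 * kmomP K 2, kmomP K 2, 0, kmomP K 3;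
         kmomP K 2, kmomP K 2, kmomP K 3, kmomP K 3] =
      !![0, 0, (2 * (kmomP K 2) ^ 2 - 2 * kmomP K 1 * kmomP K 3) /
            (kmomP K 2 - 2 * (kmomP K 1) ^ 2), 0;
         0, 0, 0, (2 * (kmomP K 2) ^ 2 - 2 * kmomP K 1 * kmomP K 3) /
            (kmomP K 2 - 2 * (kmomP K 1) ^ 2);
         1, 0, -((kmomP K 3 - 2 * kmomP K 1 * kmomP K 2) /
            (kmomP K 2 - 2 * (kmomP K 1) ^ 2)), 0;
         0, 1, 2 * ((kmomP K 3 - 2 * kmomP K 1 * kmomP K 2) /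
            (kmomP K 2 - 2 * (kmomP K 1) ^ 2)),
            (kmomP K 3 - 2 * kmomP K 1 * kmomP K 2) /
            (kmomP K 2 - 2 * (kmomP K 1) ^ 2)] := by
  have hIntP : ∀ a : ℕ, a ≤ 4 → IntegrableOn (fun u => u ^ a * K u) (Set.Ioi (0:ℝ)) :=
    fun a ha => (hKint a ha).integrableOn
  have hsymm : ∀ a : ℕ, a ≤ 4 → kmom K a = ((-1:ℝ) ^ a + 1) * kmomP K a := by
    intro a ha
    have hIic : (∫ u in Set.Iic (0:ℝ), u ^ a * K u) = (-1:ℝ) ^ a * kmomP K a := by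
      have h := integral_comp_neg_Ioi (0:ℝ) (fun u => u ^ a * K u)
      simp only [neg_zero] at h
      rw [← h]
      have he : ∀ x : ℝ, (-x) ^ a * K (-x) = (-1:ℝ) ^ a * (x ^ a * K x) := by
        intro x
        rw [hKsymm, neg_pow]
        ring
      simp_rw [he]
      rw [integral_const_mul]
      rfl
    have hsplit := intervalIntegral.integral_Iic_add_Ioi
      ((hKint a ha).integrableOn (s := Set.Iic (0:ℝ)))
      ((hKint a ha).integrableOn (s := Set.Ioi (0:ℝ)))
    have hm : kmom K a = (∫ u in Set.Iic (0:ℝ), u ^ a * K u) + kmomP K a := by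
      rw [kmom, kmomP, ← hsplit]
    rw [hm, hIic]; ring
  have hm0 : kmom K 0 = 1 := by
    rw [kmom]; simp only [pow_zero, one_mul]; exact hKone
  have hp0 : kmomP K 0 = 1 / 2 := by
    have h := hsymm 0 (by norm_num)
    rw [hm0] at h
    norm_num at h
    linarith
  have hm1 : kmom K 1 = 0 := by
    have h := hsymm 1 (by norm_num)
    norm_num at h
    exact h
  have hm2 : kmom K 2 = 2 * kmomP K 2 := by
    have h := hsymm 2 (by norm_num)
    norm_num at h
    linarith
  have hk : kappa K =
      !![1, 1/2, 0, kmomP K 1;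
         1/2, 1/2, kmomP K 1, kmomP K 1;
         0, kmomP K 1, 2 * kmomP K 2, kmomP K 2;
         kmomP K 1, kmomP K 1, kmomP K 2, kmomP K 2] := by
    rw [kappa, hm0, hm1, hm2, hp0]
  -- the key algebraic identity: κ(K) * M = d • 1
  have hKM : kappa K *
      !![-(kmomP K 2), kmomP K 2, -(kmomP K 1), kmomP K 1;
         kmomP K 2, -2 * kmomP K 2, kmomP K 1, 0;
         -(kmomP K 1), kmomP K 1, -(1 / 2), 1 / 2;
         kmomP K 1, 0, 1 / 2, -1] =
      ((kmomP K 1) ^ 2 - (1/2) * kmomP K 2) • (1 : Matrix (Fin 4) (Fin 4) ℝ) := by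
    rw [hk]
    ext i j
    fin_cases i <;> fin_cases j <;>
      simp [Matrix.mul_apply, Matrix.smul_apply, Fin.sum_univ_four, Matrix.one_apply,
        Matrix.vecHead, Matrix.vecTail] <;>
      ring
  have hdne : (kmomP K 1) ^ 2 - (1/2) * kmomP K 2 ≠ 0 := by
    intro h
    have h0 : kappa K *
        !![-(kmomP K 2), kmomP K 2, -(kmomP K 1), kmomP K 1;
           kmomP K 2, -2 * kmomP K 2, kmomP K 1, 0;
           -(kmomP K 1), kmomP K 1, -(1 / 2), 1 / 2;
           kmomP K 1, 0, 1 / 2, -1] = 0 := by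
      rw [hKM, h, zero_smul]
    have h1 := congrArg (fun X => (kappa K)⁻¹ * X) h0
    simp only [← Matrix.mul_assoc,
      Matrix.nonsing_inv_mul _ ((Matrix.isUnit_iff_isUnit_det _).mp hinv),
      Matrix.one_mul, Matrix.mul_zero] at h1
    have h2 : (-1:ℝ) = 0 := congrFun (congrFun h1 3) 3
    norm_num [Matrix.zero_apply] at h2
  -- nonnegativity of ∫ (u - 2 p₁)² K on (0, ∞)
  have hle : 2 * (kmomP K 1) ^ 2 ≤ kmomP K 2 := by
    have hnn : (0:ℝ) ≤ ∫ u in Set.Ioi (0:ℝ), (u - 2 * kmomP K 1) ^ 2 * K u :=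
      setIntegral_nonneg measurableSet_Ioi
        (fun u _ => mul_nonneg (sq_nonneg _) (hKnonneg u))
    have hexp : (∫ u in Set.Ioi (0:ℝ), (u - 2 * kmomP K 1) ^ 2 * K u)
        = kmomP K 2 - 4 * kmomP K 1 * kmomP K 1 + 4 * (kmomP K 1) ^ 2 * kmomP K 0 := by
      have h1 : (∫ u in Set.Ioi (0:ℝ), (u - 2 * kmomP K 1) ^ 2 * K u)
          = ∫ u in Set.Ioi (0:ℝ),
              ((fun v => v ^ 2 * K v + -(4 * kmomP K 1) * (v ^ 1 * K v)) u
                + (4 * (kmomP K 1) ^ 2) * (u ^ 0 * K u)) := by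
        refine setIntegral_congr_fun measurableSet_Ioi (fun u _ => ?_)
        simp only
        ring
      have i1 : Integrable (fun v : ℝ => v ^ 2 * K v + -(4 * kmomP K 1) * (v ^ 1 * K v))
          (MeasureTheory.volume.restrict (Set.Ioi (0:ℝ))) :=
        (hIntP 2 (by norm_num)).add ((hIntP 1 (by norm_num)).const_mul _)
      have i0 : Integrable (fun v : ℝ => (4 * (kmomP K 1) ^ 2) * (v ^ 0 * K v))
          (MeasureTheory.volume.restrict (Set.Ioi (0:ℝ))) :=
        (hIntP 0 (by norm_num)).const_mul _
      rw [h1, MeasureTheory.integral_add i1 i0,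
        MeasureTheory.integral_add (hIntP 2 (by norm_num))
          ((hIntP 1 (by norm_num)).const_mul _),
        integral_const_mul, integral_const_mul]
      rw [kmomP, kmomP, kmomP]
      ring
    rw [hexp, hp0] at hnn
    nlinarith
  have hlt : 2 * (kmomP K 1) ^ 2 < kmomP K 2 := by
    rcases lt_or_eq_of_le hle with h | h
    · exact h
    · exact absurd (by linarith : (kmomP K 1) ^ 2 - (1/2) * kmomP K 2 = 0) hdne
  have hinvf : (kappa K)⁻¹ = (1 / ((kmomP K 1) ^ 2 - (1 / 2) * kmomP K 2)) •
      !![-(kmomP K 2), kmomP K 2, -(kmomP K 1), kmomP K 1;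
         kmomP K 2, -2 * kmomP K 2, kmomP K 1, 0;
         -(kmomP K 1), kmomP K 1, -(1 / 2), 1 / 2;
         kmomP K 1, 0, 1 / 2, -1] := by
    apply Matrix.inv_eq_right_inv
    rw [Matrix.mul_smul, hKM, smul_smul, one_div, inv_mul_cancel₀ hdne, one_smul]
  refine ⟨hlt, hinvf, ?_⟩
  have hdne2 : kmomP K 2 - 2 * (kmomP K 1) ^ 2 ≠ 0 := by
    intro h; exact hdne (by linarith)
  rw [hinvf, Matrix.smul_mul]
  have hdne3 : kmomP K 2 - kmomP K 1 ^ 2 * 2 ≠ 0 := by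
    intro h; exact hdne2 (by linarith)
  have hMA : (!![-(kmomP K 2), kmomP K 2, -(kmomP K 1), kmomP K 1;
         kmomP K 2, -2 * kmomP K 2, kmomP K 1, 0;
         -(kmomP K 1), kmomP K 1, -(1 / 2), 1 / 2;
         kmomP K 1, 0, 1 / 2, -1] : Matrix (Fin 4) (Fin 4) ℝ) *
      !![0, kmomP K 1, 2 * kmomP K 2, kmomP K 2;
         kmomP K 1, kmomP K 1, kmomP K 2, kmomP K 2;
         2 * kmomP K 2, kmomP K 2, 0, kmomP K 3;
         kmomP K 2, kmomP K 2, kmomP K 3, kmomP K 3] =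
      ((kmomP K 1) ^ 2 - (1/2) * kmomP K 2) •
      !![0, 0, (2 * (kmomP K 2) ^ 2 - 2 * kmomP K 1 * kmomP K 3) /
            (kmomP K 2 - 2 * (kmomP K 1) ^ 2), 0;
         0, 0, 0, (2 * (kmomP K 2) ^ 2 - 2 * kmomP K 1 * kmomP K 3) /
            (kmomP K 2 - 2 * (kmomP K 1) ^ 2);
         1, 0, -((kmomP K 3 - 2 * kmomP K 1 * kmomP K 2) /
            (kmomP K 2 - 2 * (kmomP K 1) ^ 2)), 0;
         0, 1, 2 * ((kmomP K 3 - 2 * kmomP K 1 * kmomP K 2) /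
            (kmomP K 2 - 2 * (kmomP K 1) ^ 2)),
            (kmomP K 3 - 2 * kmomP K 1 * kmomP K 2) /
            (kmomP K 2 - 2 * (kmomP K 1) ^ 2)] := by
    ext i j
    fin_cases i <;> fin_cases j <;>
      simp [Matrix.mul_apply, Matrix.smul_apply, Fin.sum_univ_four,
        Matrix.vecHead, Matrix.vecTail] <;>
      (try field_simp) <;> ring
  rw [hMA, smul_smul, one_div, inv_mul_cancel₀ hdne, one_smul]

end
end

section
/- Let X_1,…,X_n be i.i.d. real random variables with a density f_X that is twice continuously differentiable in a neighbourhood of 0, and let K:ℝ→[0,∞) be a continuous, symmetric kernel supported in [−1,1] with ∫K = 1. Let h = h_n → 0 with nh → ∞, and set V_i = (1, 1{X_i≥0}, X_i/h, 1{X_i≥0}X_i/h)^⊤ and K_h(x) = K(x/h)/h. Then: (i) E(K_h(X_1)V_1V_1^⊤) = f_X(0)κ(K) + h·f_X'(0)·M₁ + (h²/2)·f_X''(0)·M₂ + o(h²) entrywise as h → 0, where M₁ has rows (K^{(1)},K_+^{(1)},K^{(2)},K_+^{(2)}), (K_+^{(1)},K_+^{(1)},K_+^{(2)},K_+^{(2)}),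 (K^{(2)},K_+^{(2)},K^{(3)},K_+^{(3)}), (K_+^{(2)},K_+^{(2)},K_+^{(3)},K_+^{(3)}) and M₂ has rows (K^{(2)},K_+^{(2)},K^{(3)},K_+^{(3)}), (K_+^{(2)},K_+^{(2)},K_+^{(3)},K_+^{(3)}), (K^{(3)},K_+^{(3)},K^{(4)},K_+^{(4)}), (K_+^{(3)},K_+^{(3)},K_+^{(4)},K_+^{(4)}); and (ii) each entry of (1/n)Σ_{i=1}^n K_h(X_i)V_iV_i^⊤ − E(K_h(X_1)V_1V_1^⊤) has variance O(1/(nh)); in particular (1/n)Σ_iK_h(X_i)V_iV_i^⊤ converges entrywise in probability to f_X(0)κ(K). -/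
open MeasureTheory ProbabilityTheory Filter Asymptotics

noncomputable section

/-- Indicator `1{x ≥ 0}`. -/
def indPos (x : ℝ) : ℝ := if 0 ≤ x then 1 else 0

/-- The RD design vector `V = (1, 1{x≥0}, x/h, 1{x≥0}·x/h)`. -/
def Vvec (h x : ℝ) : Fin 4 → ℝ := ![1, indPos x, x / h, indPos x * (x / h)]

/-- Kernel weight `K_h(x) = K(x/h)/h`. -/
def Kh (K : ℝ → ℝ) (h x : ℝ) : ℝ := K (x / h) / h

/-- The first-order matrix M₁ in the expansion. -/
def kmatM1 (K : ℝ → ℝ) : Matrix (Fin 4) (Fin 4) ℝ :=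
  !![kmom K 1, kmomP K 1, kmom K 2, kmomP K 2;
     kmomP K 1, kmomP K 1, kmomP K 2, kmomP K 2;
     kmom K 2, kmomP K 2, kmom K 3, kmomP K 3;
     kmomP K 2, kmomP K 2, kmomP K 3, kmomP K 3]

/-- The second-order matrix M₂ in the expansion. -/
def kmatM2 (K : ℝ → ℝ) : Matrix (Fin 4) (Fin 4) ℝ :=
  !![kmom K 2, kmomP K 2, kmom K 3, kmomP K 3;
     kmomP K 2, kmomP K 2, kmomP K 3, kmomP K 3;
     kmom K 3, kmomP K 3, kmom K 4, kmomP K 4;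
     kmomP K 3, kmomP K 3, kmomP K 4, kmomP K 4]

/-!
Every entry of `K_h(x) V Vᵀ` has the form `w(x/h)/h` for the weight `w(u) = 1{u ≥ 0}^s u^p K(u)`
(`s, p ≤ 2`), which is bounded and vanishes outside `[-1, 1]`. The substitution `x = hu` turns
`E[w(X/h)/h]` into `∫ w(u) f(hu) du`; since `w` only sees `f` on `[-h, h]`, the second-order
Taylor expansion of `f` at `0` integrates to (i), with remainder `o(h²) ∫ |w|`. The same
substitution gives `h E[(w(X/h)/h)²] → f(0) ∫ w²`, so the second moment is `O(1/h)` and the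
average of `n` i.i.d. copies has variance `O(1/(nh))`. Chebyshev's inequality, together with
the convergence of the mean, gives the convergence in probability.
-/

open Topology
open scoped ENNReal

theorem isLittleO_sub_taylor_two {f : ℝ → ℝ} {ε : ℝ} (hε : 0 < ε)
    (hf : ContDiffOn ℝ 2 f (Metric.ball 0 ε)) :
    (fun x => f x - (f 0 + deriv f 0 * x + deriv (deriv f) 0 / 2 * x ^ 2))
      =o[𝓝 0] fun x => x ^ 2 := by
  have h0 : (0 : ℝ) ∈ Metric.ball 0 ε := Metric.mem_ball_self hε
  have key := taylor_isLittleO (convex_ball 0 ε) h0 hf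
  rw [nhdsWithin_eq_nhds.2 (Metric.isOpen_ball.mem_nhds h0)] at key
  simp only [sub_zero] at key
  refine key.congr_left fun x => ?_
  simp only [taylor_within_apply, Finset.sum_range_succ, Finset.range_one,
    Finset.sum_singleton, iteratedDerivWithin_of_isOpen Metric.isOpen_ball h0,
    iteratedDeriv_zero, iteratedDeriv_succ, Nat.factorial, Nat.cast_one, smul_eq_mul, sub_zero]
  ring

lemma integrable_of_abs_le_of_eq_zero_outside {q : ℝ → ℝ} {s : Set ℝ} (hs : volume s ≠ ∞)
    (hqm : AEStronglyMeasurable q) {C : ℝ} (hqC : ∀ u, |q u| ≤ C) (hq0 : ∀ u ∉ s, q u = 0) :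
    Integrable q := by
  rw [← integrableOn_iff_integrable_of_support_subset fun u hu => not_not.1 (mt (hq0 u) hu)]
  exact Measure.integrableOn_of_bounded hs hqm (ae_of_all _ hqC)

lemma eventually_norm_mul_comp_mul_le {q r : ℝ → ℝ} (hq0 : ∀ u ∉ Set.Icc (-1 : ℝ) 1, q u = 0)
    (hr : r =o[𝓝 0] fun x => x ^ 2) {ε : ℝ} (hε : 0 < ε) :
    ∀ᶠ t in 𝓝 0, ∀ u, ‖q u * r (t * u)‖ ≤ ε * t ^ 2 * ‖q u‖ := by
  obtain ⟨δ, hδ, hrδ⟩ := Metric.eventually_nhds_iff.1 (hr.def hε)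
  filter_upwards [Metric.ball_mem_nhds 0 hδ] with t ht u
  by_cases hu : u ∈ Set.Icc (-1 : ℝ) 1
  · have hu1 : |u| ≤ 1 := abs_le.2 hu
    have htu : dist (t * u) 0 < δ := by
      simpa [abs_mul] using lt_of_le_of_lt (mul_le_of_le_one_right (abs_nonneg t) hu1)
        (by simpa using ht)
    have hr' : ‖r (t * u)‖ ≤ ε * t ^ 2 := by
      refine (hrδ htu).trans ?_
      rw [norm_pow, Real.norm_eq_abs, sq_abs, mul_pow]
      exact mul_le_mul_of_nonneg_left
        (mul_le_of_le_one_right (sq_nonneg t) (by nlinarith [abs_nonneg u, sq_abs u])) hε.le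
    rw [norm_mul, mul_comm]
    exact mul_le_mul_of_nonneg_right hr' (norm_nonneg _)
  · simp [hq0 u hu]

section Expansion

variable {q : ℝ → ℝ} (hq : Integrable q) (hq0 : ∀ u ∉ Set.Icc (-1 : ℝ) 1, q u = 0)
include hq hq0

lemma integrable_pow_mul_of_eq_zero_outside (k : ℕ) : Integrable fun u => u ^ k * q u := by
  refine hq.mono ((continuous_pow k).aestronglyMeasurable.mul hq.1) (ae_of_all _ fun u => ?_)
  by_cases hu : u ∈ Set.Icc (-1 : ℝ) 1
  · rw [norm_mul]
    exact mul_le_of_le_one_left (norm_nonneg _)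
      (by simpa [abs_pow] using pow_le_one₀ (abs_nonneg u) (abs_le.2 hu))
  · simp [hq0 u hu]

lemma isLittleO_integral_mul_comp_mul_of_isLittleO {r : ℝ → ℝ}
    (hr : r =o[𝓝 0] fun x => x ^ 2) :
    (fun t => ∫ u, q u * r (t * u)) =o[𝓝 0] fun t => t ^ 2 := by
  refine IsLittleO.trans_isBigO (g := fun t => (∫ u, ‖q u‖) * t ^ 2) ?_
    (isBigO_const_mul_self _ _ _)
  refine isLittleO_iff.2 fun ε hε => ?_
  filter_upwards [eventually_norm_mul_comp_mul_le hq0 hr hε] with t ht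
  calc ‖∫ u, q u * r (t * u)‖ ≤ ∫ u, ε * t ^ 2 * ‖q u‖ :=
        norm_integral_le_of_norm_le (hq.norm.const_mul _) (ae_of_all _ ht)
    _ = ε * ‖(∫ u, ‖q u‖) * t ^ 2‖ := by
        rw [integral_const_mul, Real.norm_of_nonneg (by positivity)]; ring

theorem isLittleO_integral_mul_comp_mul {f : ℝ → ℝ} {a b c : ℝ} (hfm : Measurable f)
    (hf : (fun x => f x - (a + b * x + c * x ^ 2)) =o[𝓝 0] fun x => x ^ 2) :
    (fun t => (∫ u, q u * f (t * u)) -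
        (a * (∫ u, q u) + t * b * (∫ u, u * q u) + t ^ 2 * c * ∫ u, u ^ 2 * q u))
      =o[𝓝 0] fun t => t ^ 2 := by
  set r : ℝ → ℝ := fun x => f x - (a + b * x + c * x ^ 2) with hr
  have hrm : Measurable r := by fun_prop
  have hintegrable : ∀ᶠ t in 𝓝 0, Integrable fun u => q u * r (t * u) := by
    filter_upwards [eventually_norm_mul_comp_mul_le hq0 hf one_pos] with t ht
    exact (hq.norm.const_mul (1 * t ^ 2)).mono'
      (hq.1.mul (hrm.comp (measurable_const_mul t)).aestronglyMeasurable) (ae_of_all _ ht)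
  have h1 : Integrable fun u => u * q u := by
    simpa using integrable_pow_mul_of_eq_zero_outside hq hq0 1
  have h2 := integrable_pow_mul_of_eq_zero_outside hq hq0 2
  refine (isLittleO_integral_mul_comp_mul_of_isLittleO hq hq0 hf).congr' ?_ EventuallyEq.rfl
  filter_upwards [hintegrable] with t ht
  have hpoint : (fun u => q u * f (t * u)) = fun u =>
      (a * q u + t * b * (u * q u) + t ^ 2 * c * (u ^ 2 * q u)) + q u * r (t * u) := by
    ext u; simp only [hr]; ring
  have h01 : Integrable fun u => a * q u + t * b * (u * q u) :=
    (hq.const_mul a).add (h1.const_mul _)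
  have hpoly : Integrable fun u => a * q u + t * b * (u * q u) + t ^ 2 * c * (u ^ 2 * q u) :=
    h01.add (h2.const_mul _)
  rw [hpoint, integral_add hpoly ht, integral_add h01 (h2.const_mul _),
    integral_add (hq.const_mul a) (h1.const_mul _), integral_const_mul, integral_const_mul,
    integral_const_mul]
  ring

theorem tendsto_integral_mul_comp_mul {f : ℝ → ℝ} {a b c : ℝ} (hfm : Measurable f)
    (hf : (fun x => f x - (a + b * x + c * x ^ 2)) =o[𝓝 0] fun x => x ^ 2) :
    Tendsto (fun t => ∫ u, q u * f (t * u)) (𝓝 0) (𝓝 (a * ∫ u, q u)) := by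
  have hpoly : Tendsto (fun t : ℝ => a * (∫ u, q u) + t * b * (∫ u, u * q u)
      + t ^ 2 * c * ∫ u, u ^ 2 * q u) (𝓝 0) (𝓝 (a * ∫ u, q u)) :=
    (by fun_prop : Continuous _).tendsto' _ _ (by simp)
  have hrem := (isLittleO_integral_mul_comp_mul hq hq0 hfm hf).trans_tendsto
    (by simpa using (continuous_pow 2).tendsto (0 : ℝ))
  simpa using hrem.add hpoly

end Expansion

lemma integral_comp_eq_integral_mul_density {Ω : Type*} [MeasurableSpace Ω] {P : Measure Ω}
    {X : Ω → ℝ} (hX : AEMeasurable X P) {f : ℝ → ℝ} (hfm : Measurable f) (hf0 : ∀ x, 0 ≤ f x)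
    (hdens : P.map X = volume.withDensity fun x => ENNReal.ofReal (f x))
    {g : ℝ → ℝ} (hg : Measurable g) :
    ∫ ω, g (X ω) ∂P = ∫ x, f x * g x := by
  rw [← integral_map hX hg.aestronglyMeasurable, hdens]
  change ∫ x, g x ∂(volume.withDensity fun x => ((f x).toNNReal : ℝ≥0∞)) = _
  rw [integral_withDensity_eq_integral_smul hfm.real_toNNReal]
  simp [NNReal.smul_def, Real.coe_toNNReal _ (hf0 _)]

section Kh

variable {q : ℝ → ℝ} {h : ℝ}

lemma measurable_Kh (hq : Measurable q) : Measurable (Kh q h) := by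
  unfold Kh; fun_prop

lemma abs_Kh_le (hh : 0 < h) {C : ℝ} (hqC : ∀ u, |q u| ≤ C) (x : ℝ) : |Kh q h x| ≤ C / h := by
  rw [Kh, abs_div, abs_of_pos hh]
  exact div_le_div_of_nonneg_right (hqC _) hh.le

lemma Kh_sq (x : ℝ) : Kh q h x ^ 2 = Kh (fun u => q u ^ 2) h x / h := by
  simp only [Kh]; ring

lemma integral_mul_Kh (f : ℝ → ℝ) (hh : 0 < h) :
    ∫ x, f x * Kh q h x = ∫ u, q u * f (h * u) := by
  have hx : ∀ x, f x * Kh q h x = (fun u => q u * f (h * u) / h) (x / h) := fun x => by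
    simp only [Kh, mul_div_cancel₀ x hh.ne']; ring
  simp_rw [hx]
  rw [Measure.integral_comp_div (fun u => q u * f (h * u) / h), abs_of_pos hh, integral_div,
    smul_eq_mul]
  field_simp

variable {Ω : Type*} [MeasurableSpace Ω] {P : Measure Ω} {X : Ω → ℝ} {f : ℝ → ℝ}

lemma integral_Kh_comp_eq_of_density (hX : AEMeasurable X P) (hfm : Measurable f)
    (hf0 : ∀ x, 0 ≤ f x) (hdens : P.map X = volume.withDensity fun x => ENNReal.ofReal (f x))
    (hqm : Measurable q) (hh : 0 < h) :
    ∫ ω, Kh q h (X ω) ∂P = ∫ u, q u * f (h * u) := by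
  rw [integral_comp_eq_integral_mul_density hX hfm hf0 hdens (measurable_Kh hqm),
    integral_mul_Kh f hh]

lemma mul_integral_Kh_comp_sq_eq_of_density (hX : AEMeasurable X P) (hfm : Measurable f)
    (hf0 : ∀ x, 0 ≤ f x) (hdens : P.map X = volume.withDensity fun x => ENNReal.ofReal (f x))
    (hqm : Measurable q) (hh : 0 < h) :
    h * ∫ ω, Kh q h (X ω) ^ 2 ∂P = ∫ u, q u ^ 2 * f (h * u) := by
  rw [← integral_Kh_comp_eq_of_density hX hfm hf0 hdens (hqm.pow_const 2) hh]
  simp_rw [Kh_sq, integral_div]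
  field_simp

end Kh

section IID

variable {Ω : Type*} [MeasurableSpace Ω] {P : Measure Ω} {X : ℕ → Ω → ℝ}

lemma identDistrib_of_map_eq (hXm : ∀ i, Measurable (X i))
    (hident : ∀ i, P.map (X i) = P.map (X 0)) (i : ℕ) : IdentDistrib (X i) (X 0) P P :=
  ⟨(hXm i).aemeasurable, (hXm 0).aemeasurable, hident i⟩

lemma integral_sampleMean (hXm : ∀ i, Measurable (X i))
    (hident : ∀ i, P.map (X i) = P.map (X 0)) {g : ℝ → ℝ} (hg : Measurable g)
    (hgi : Integrable (g ∘ X 0) P) {n : ℕ} (hn : n ≠ 0) :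
    ∫ ω, (1 / (n : ℝ)) * ∑ i ∈ Finset.range n, g (X i ω) ∂P = ∫ ω, g (X 0 ω) ∂P := by
  have hid := fun i => (identDistrib_of_map_eq hXm hident i).comp hg
  rw [integral_const_mul, integral_finsetSum (f := fun i ω => g (X i ω)) _
    fun i _ => (hid i).integrable_iff.2 hgi]
  have hint : ∀ i, ∫ ω, g (X i ω) ∂P = ∫ ω, g (X 0 ω) ∂P := fun i => (hid i).integral_eq
  simp only [hint, Finset.sum_const, Finset.card_range, nsmul_eq_mul]
  field_simp

lemma variance_sampleMean (hXm : ∀ i, Measurable (X i)) (hindep : iIndepFun X P)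
    (hident : ∀ i, P.map (X i) = P.map (X 0)) {g : ℝ → ℝ} (hg : Measurable g)
    (hg2 : MemLp (g ∘ X 0) 2 P) (n : ℕ) :
    variance (fun ω => (1 / (n : ℝ)) * ∑ i ∈ Finset.range n, g (X i ω)) P
      = variance (g ∘ X 0) P / n := by
  have hid := fun i => (identDistrib_of_map_eq hXm hident i).comp hg
  have hsum : variance (∑ i ∈ Finset.range n, g ∘ X i) P = n * variance (g ∘ X 0) P := by
    rw [IndepFun.variance_sum (fun i _ => (hid i).memLp_iff.2 hg2)
      fun i _ j _ hij => (hindep.indepFun hij).comp hg hg]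
    simp [fun i => (hid i).variance_eq]
  calc variance (fun ω => (1 / (n : ℝ)) * ∑ i ∈ Finset.range n, g (X i ω)) P
      = variance (fun ω => (1 / (n : ℝ)) * (∑ i ∈ Finset.range n, g ∘ X i) ω) P := by
        simp [Finset.sum_apply]
    _ = variance (g ∘ X 0) P / n := by
        rw [variance_const_mul, hsum]
        rcases eq_or_ne n 0 with rfl | hn
        · simp
        · field_simp

end IID

lemma tendsto_measure_lt_abs_sub {Ω : Type*} [MeasurableSpace Ω] {P : Measure Ω}
    [IsFiniteMeasure P] {ι : Type*} {l : Filter ι} {Z : ι → Ω → ℝ} {L : ℝ}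
    (hZ : ∀ i, MemLp (Z i) 2 P) (hmean : Tendsto (fun i => ∫ ω, Z i ω ∂P) l (𝓝 L))
    (hvar : Tendsto (fun i => variance (Z i) P) l (𝓝 0)) {δ : ℝ} (hδ : 0 < δ) :
    Tendsto (fun i => (P {ω | δ < |Z i ω - L|}).toReal) l (𝓝 0) := by
  have hbias : ∀ᶠ i in l, |(∫ ω, Z i ω ∂P) - L| < δ / 2 := by
    simpa [Real.dist_eq] using Metric.tendsto_nhds.1 hmean (δ / 2) (by positivity)
  refine squeeze_zero' (Eventually.of_forall fun _ => ENNReal.toReal_nonneg) ?_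
    (by simpa using hvar.div_const ((δ / 2) ^ 2))
  filter_upwards [hbias] with i hi
  have hsub : {ω | δ < |Z i ω - L|} ⊆ {ω | δ / 2 ≤ |Z i ω - ∫ ω, Z i ω ∂P|} :=
    fun ω (hω : δ < |Z i ω - L|) => show δ / 2 ≤ _ by
      linarith [abs_sub_le (Z i ω) (∫ ω, Z i ω ∂P) L]
  calc (P {ω | δ < |Z i ω - L|}).toReal
      ≤ (ENNReal.ofReal (variance (Z i) P / (δ / 2) ^ 2)).toReal :=
        ENNReal.toReal_mono ENNReal.ofReal_ne_top
          ((measure_mono hsub).trans (meas_ge_le_variance_div_sq (hZ i) (by positivity)))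
    _ = variance (Z i) P / (δ / 2) ^ 2 :=
        ENNReal.toReal_ofReal (div_nonneg (variance_nonneg _ _) (by positivity))

section KernelWeightedMean

variable {Ω : Type*} [MeasurableSpace Ω] {P : Measure Ω} {f q : ℝ → ℝ} {h : ℕ → ℝ}

theorem isLittleO_integral_Kh_comp_sub {X₀ : Ω → ℝ} (hX : Measurable X₀) (hfm : Measurable f)
    (hf0 : ∀ x, 0 ≤ f x) (hdens : P.map X₀ = volume.withDensity fun x => ENNReal.ofReal (f x))
    {ε : ℝ} (hε : 0 < ε) (hf : ContDiffOn ℝ 2 f (Metric.ball 0 ε))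
    (hqm : Measurable q) (hq : Integrable q) (hq0 : ∀ u ∉ Set.Icc (-1 : ℝ) 1, q u = 0)
    (hhpos : ∀ n, 0 < h n) (hh0 : Tendsto h atTop (𝓝 0)) :
    (fun n => (∫ ω, Kh q (h n) (X₀ ω) ∂P) -
        (f 0 * (∫ u, q u) + h n * deriv f 0 * (∫ u, u * q u) +
          (h n) ^ 2 / 2 * deriv (deriv f) 0 * ∫ u, u ^ 2 * q u))
      =o[atTop] fun n => (h n) ^ 2 := by
  refine ((isLittleO_integral_mul_comp_mul hq hq0 hfm
    (isLittleO_sub_taylor_two hε hf)).comp_tendsto hh0).congr (fun n => ?_) fun _ => rfl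
  simp only [Function.comp_apply,
    integral_Kh_comp_eq_of_density hX.aemeasurable hfm hf0 hdens hqm (hhpos n)]
  ring

variable {X : ℕ → Ω → ℝ} [IsProbabilityMeasure P]

theorem variance_mean_Kh_comp_isBigO (hXm : ∀ i, Measurable (X i)) (hindep : iIndepFun X P)
    (hident : ∀ i, P.map (X i) = P.map (X 0)) (hfm : Measurable f) (hf0 : ∀ x, 0 ≤ f x)
    (hdens : P.map (X 0) = volume.withDensity fun x => ENNReal.ofReal (f x))
    {ε : ℝ} (hε : 0 < ε) (hf : ContDiffOn ℝ 2 f (Metric.ball 0 ε))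
    (hqm : Measurable q) {C : ℝ} (hqC : ∀ u, |q u| ≤ C)
    (hq0 : ∀ u ∉ Set.Icc (-1 : ℝ) 1, q u = 0)
    (hhpos : ∀ n, 0 < h n) (hh0 : Tendsto h atTop (𝓝 0)) :
    (fun n : ℕ => variance (fun ω => (1 / (n : ℝ)) * ∑ i ∈ Finset.range n,
        Kh q (h n) (X i ω)) P) =O[atTop] fun n : ℕ => 1 / ((n : ℝ) * h n) := by
  have hq2 : Integrable fun u => q u ^ 2 :=
    integrable_of_abs_le_of_eq_zero_outside (s := Set.Icc (-1) 1) (by simp)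
      (hqm.pow_const 2).aestronglyMeasurable
      (fun u => by simpa [abs_pow] using pow_le_pow_left₀ (abs_nonneg _) (hqC u) 2)
      fun u hu => by simp [hq0 u hu]
  have hsecond : (fun n => h n * ∫ ω, Kh q (h n) (X 0 ω) ^ 2 ∂P) =O[atTop] fun _ => (1 : ℝ) := by
    refine Tendsto.isBigO_one ℝ (c := f 0 * ∫ u, q u ^ 2) ?_
    refine ((tendsto_integral_mul_comp_mul hq2 (fun u hu => by simp [hq0 u hu]) hfm
      (isLittleO_sub_taylor_two hε hf)).comp hh0).congr fun n => ?_
    exact (mul_integral_Kh_comp_sq_eq_of_density (hXm 0).aemeasurable hfm hf0 hdens hqm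
      (hhpos n)).symm
  refine (IsBigO.of_bound 1 (Eventually.of_forall fun n => ?_)).trans
    ((hsecond.mul (isBigO_refl (fun n : ℕ => 1 / ((n : ℝ) * h n)) atTop)).congr_right
      fun n => one_mul _)
  have hY := (measurable_Kh (h := h n) hqm).comp (hXm 0)
  have hvar : variance (fun ω => (1 / (n : ℝ)) * ∑ i ∈ Finset.range n, Kh q (h n) (X i ω)) P
      ≤ (h n * ∫ ω, Kh q (h n) (X 0 ω) ^ 2 ∂P) * (1 / ((n : ℝ) * h n)) := by
    rw [variance_sampleMean hXm hindep hident (measurable_Kh hqm)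
      (MemLp.of_bound hY.aestronglyMeasurable _
        (ae_of_all _ fun ω => abs_Kh_le (hhpos n) hqC (X 0 ω)))]
    have hmoment : variance (Kh q (h n) ∘ X 0) P ≤ ∫ ω, Kh q (h n) (X 0 ω) ^ 2 ∂P := by
      simpa using variance_le_expectation_sq hY.aestronglyMeasurable
    calc variance (Kh q (h n) ∘ X 0) P / n ≤ (∫ ω, Kh q (h n) (X 0 ω) ^ 2 ∂P) / n :=
          div_le_div_of_nonneg_right hmoment n.cast_nonneg
      _ = _ := by
          rcases eq_or_ne n 0 with rfl | hn
          · simp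
          · field_simp [(hhpos n).ne']
  rw [one_mul, Real.norm_of_nonneg (variance_nonneg _ _)]
  exact hvar.trans (le_abs_self _)

theorem tendsto_measure_lt_abs_mean_Kh_comp_sub (hXm : ∀ i, Measurable (X i))
    (hindep : iIndepFun X P) (hident : ∀ i, P.map (X i) = P.map (X 0)) (hfm : Measurable f)
    (hf0 : ∀ x, 0 ≤ f x)
    (hdens : P.map (X 0) = volume.withDensity fun x => ENNReal.ofReal (f x))
    {ε : ℝ} (hε : 0 < ε) (hf : ContDiffOn ℝ 2 f (Metric.ball 0 ε))
    (hqm : Measurable q) {C : ℝ} (hqC : ∀ u, |q u| ≤ C)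
    (hq0 : ∀ u ∉ Set.Icc (-1 : ℝ) 1, q u = 0)
    (hhpos : ∀ n, 0 < h n) (hh0 : Tendsto h atTop (𝓝 0))
    (hnh : Tendsto (fun n : ℕ => (n : ℝ) * h n) atTop atTop) {δ : ℝ} (hδ : 0 < δ) :
    Tendsto (fun n : ℕ => (P {ω | δ < |(1 / (n : ℝ)) * (∑ i ∈ Finset.range n,
        Kh q (h n) (X i ω)) - f 0 * ∫ u, q u|}).toReal) atTop (𝓝 0) := by
  have hq : Integrable q := integrable_of_abs_le_of_eq_zero_outside (s := Set.Icc (-1) 1)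
    (by simp) hqm.aestronglyMeasurable hqC hq0
  have hYbdd : ∀ n i, MemLp (fun ω => Kh q (h n) (X i ω)) 2 P := fun n i =>
    MemLp.of_bound ((measurable_Kh hqm).comp (hXm i)).aestronglyMeasurable _
      (ae_of_all _ fun ω => abs_Kh_le (hhpos n) hqC (X i ω))
  refine tendsto_measure_lt_abs_sub
    (Z := fun (n : ℕ) ω => (1 / (n : ℝ)) * ∑ i ∈ Finset.range n, Kh q (h n) (X i ω))
    (fun n => ((memLp_finsetSum _ fun i _ => hYbdd n i).const_mul _)) ?_ ?_ hδ
  · have hmean := (tendsto_integral_mul_comp_mul hq hq0 hfm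
      (isLittleO_sub_taylor_two hε hf)).comp hh0
    refine hmean.congr' ?_
    filter_upwards [eventually_ne_atTop 0] with n hn
    rw [Function.comp_apply, integral_sampleMean hXm hident (measurable_Kh hqm)
      ((hYbdd n 0).integrable one_le_two) hn,
      integral_Kh_comp_eq_of_density (hXm 0).aemeasurable hfm hf0 hdens hqm (hhpos n)]
  · exact (variance_mean_Kh_comp_isBigO hXm hindep hident hfm hf0 hdens hε hf hqm hqC hq0
      hhpos hh0).trans_tendsto (by simpa only [one_div, Pi.inv_def] using hnh.inv_tendsto_atTop)

end KernelWeightedMean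

lemma measurable_indPos : Measurable indPos :=
  Measurable.ite measurableSet_Ici measurable_const measurable_const

lemma indPos_div {h : ℝ} (hh : 0 < h) (x : ℝ) : indPos (x / h) = indPos x := by
  simp [indPos, le_div_iff₀ hh]

lemma abs_indPos_pow_le_one (x : ℝ) (s : ℕ) : |indPos x ^ s| ≤ 1 := by
  rw [abs_pow]
  exact pow_le_one₀ (abs_nonneg _) (by unfold indPos; split_ifs <;> simp)

def weightedKernel (K : ℝ → ℝ) (s p : ℕ) (u : ℝ) : ℝ := indPos u ^ s * u ^ p * K u

def indPosExp : Fin 4 → ℕ := ![0, 1, 0, 1]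

def ratioExp : Fin 4 → ℕ := ![0, 0, 1, 1]

lemma Vvec_eq (h x : ℝ) (a : Fin 4) :
    Vvec h x a = indPos x ^ indPosExp a * (x / h) ^ ratioExp a := by
  fin_cases a <;> simp [Vvec, indPosExp, ratioExp]

lemma Kh_mul_Vvec_mul_Vvec (K : ℝ → ℝ) {h : ℝ} (hh : 0 < h) (x : ℝ) (a b : Fin 4) :
    Kh K h x * Vvec h x a * Vvec h x b =
      Kh (weightedKernel K (indPosExp a + indPosExp b) (ratioExp a + ratioExp b)) h x := by
  simp only [Kh, weightedKernel, Vvec_eq, indPos_div hh, pow_add]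
  ring

section WeightedKernel

variable {K : ℝ → ℝ}

lemma measurable_weightedKernel (hK : Measurable K) (s p : ℕ) :
    Measurable (weightedKernel K s p) := by
  unfold weightedKernel
  exact ((measurable_indPos.pow_const s).mul (measurable_id.pow_const p)).mul hK

lemma weightedKernel_eq_zero (hKsupp : ∀ u : ℝ, u ∉ Set.Icc (-1 : ℝ) 1 → K u = 0) (s p : ℕ)
    (u : ℝ) (hu : u ∉ Set.Icc (-1 : ℝ) 1) : weightedKernel K s p u = 0 := by
  simp [weightedKernel, hKsupp u hu]

lemma abs_weightedKernel_le (hKsupp : ∀ u : ℝ, u ∉ Set.Icc (-1 : ℝ) 1 → K u = 0) (s p : ℕ)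
    (u : ℝ) : |weightedKernel K s p u| ≤ |K u| := by
  by_cases hu : u ∈ Set.Icc (-1 : ℝ) 1
  · rw [weightedKernel, abs_mul, abs_mul]
    have hup : |u ^ p| ≤ 1 := by
      rw [abs_pow]; exact pow_le_one₀ (abs_nonneg u) (abs_le.2 hu)
    exact mul_le_of_le_one_left (abs_nonneg _)
      (mul_le_one₀ (abs_indPos_pow_le_one u s) (abs_nonneg _) hup)
  · simp [weightedKernel_eq_zero hKsupp s p u hu]

lemma integral_weightedKernel_zero (p : ℕ) : ∫ u, weightedKernel K 0 p u = kmom K p := by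
  simp [weightedKernel, kmom]

lemma integral_weightedKernel_of_ne_zero {s : ℕ} (hs : s ≠ 0) (p : ℕ) :
    ∫ u, weightedKernel K s p u = kmomP K p := by
  have hind : weightedKernel K s p = (Set.Ici 0).indicator fun u => u ^ p * K u := by
    ext u
    by_cases hu : 0 ≤ u <;> simp [weightedKernel, indPos, hu, hs]
  rw [hind, integral_indicator measurableSet_Ici, integral_Ici_eq_integral_Ioi, kmomP]

lemma integral_pow_mul_weightedKernel (s p k : ℕ) :
    ∫ u, u ^ k * weightedKernel K s p u = ∫ u, weightedKernel K s (p + k) u := by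
  simp only [weightedKernel, pow_add]
  congr 1; ext u; ring

lemma kappa_apply (a b : Fin 4) :
    kappa K a b = ∫ u, weightedKernel K (indPosExp a + indPosExp b) (ratioExp a + ratioExp b) u := by
  fin_cases a <;> fin_cases b <;>
    simp [kappa, indPosExp, ratioExp, integral_weightedKernel_zero,
      integral_weightedKernel_of_ne_zero]

lemma kmatM1_apply (a b : Fin 4) :
    kmatM1 K a b =
      ∫ u, u * weightedKernel K (indPosExp a + indPosExp b) (ratioExp a + ratioExp b) u := by
  have hmul := integral_pow_mul_weightedKernel (K := K) (indPosExp a + indPosExp b)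
    (ratioExp a + ratioExp b) 1
  simp only [pow_one] at hmul
  rw [hmul]
  clear hmul
  fin_cases a <;> fin_cases b <;>
    simp [kmatM1, indPosExp, ratioExp, integral_weightedKernel_zero,
      integral_weightedKernel_of_ne_zero]

lemma kmatM2_apply (a b : Fin 4) :
    kmatM2 K a b =
      ∫ u, u ^ 2 * weightedKernel K (indPosExp a + indPosExp b) (ratioExp a + ratioExp b) u := by
  rw [integral_pow_mul_weightedKernel]
  fin_cases a <;> fin_cases b <;>
    simp [kmatM2, indPosExp, ratioExp, integral_weightedKernel_zero,
      integral_weightedKernel_of_ne_zero]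

end WeightedKernel

theorem kernel_design_matrix_expansion_general
    {Ω : Type*} [MeasurableSpace Ω] (P : Measure Ω) [IsProbabilityMeasure P]
    (X : ℕ → Ω → ℝ) (hXmeas : ∀ i, Measurable (X i))
    (hindep : iIndepFun X P)
    (hident : ∀ i, Measure.map (X i) P = Measure.map (X 0) P)
    -- density of X, twice continuously differentiable near 0
    (f : ℝ → ℝ) (hfmeas : Measurable f) (hfnonneg : ∀ x, 0 ≤ f x)
    (hdens : Measure.map (X 0) P = volume.withDensity fun x => ENNReal.ofReal (f x))
    (ε : ℝ) (hε : 0 < ε) (hf : ContDiffOn ℝ 2 f (Metric.ball (0 : ℝ) ε))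
    -- kernel: continuous, symmetric, supported in [−1,1], integrating to one
    (K : ℝ → ℝ) (hKcont : Continuous K)
    (hKsupp : ∀ u : ℝ, u ∉ Set.Icc (-1 : ℝ) 1 → K u = 0)
    -- bandwidth
    (h : ℕ → ℝ) (hhpos : ∀ n, 0 < h n)
    (hh0 : Tendsto h atTop (nhds 0))
    (hnh : Tendsto (fun n : ℕ => (n : ℝ) * h n) atTop atTop) :
    -- (i) second-order expansion of the expected kernel-weighted design matrix
    (∀ a b : Fin 4,
      (fun n => (∫ ω, Kh K (h n) (X 0 ω) * Vvec (h n) (X 0 ω) a *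
            Vvec (h n) (X 0 ω) b ∂P) -
          (f 0 * kappa K a b + h n * deriv f 0 * kmatM1 K a b +
            (h n) ^ 2 / 2 * deriv (deriv f) 0 * kmatM2 K a b)) =o[atTop]
        (fun n => (h n) ^ 2)) ∧
    -- (ii) each entry of the centered empirical matrix has variance O(1/(nh)) ...
    (∀ a b : Fin 4,
      (fun n : ℕ => variance (fun ω => (1 / (n : ℝ)) * ∑ i ∈ Finset.range n,
          Kh K (h n) (X i ω) * Vvec (h n) (X i ω) a * Vvec (h n) (X i ω) b) P)
        =O[atTop] (fun n : ℕ => 1 / ((n : ℝ) * h n))) ∧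
    -- ... and in particular the empirical matrix converges entrywise in probability
    (∀ a b : Fin 4, ∀ δ > (0 : ℝ),
      Tendsto (fun n : ℕ => (P {ω | δ < |(1 / (n : ℝ)) * (∑ i ∈ Finset.range n,
          Kh K (h n) (X i ω) * Vvec (h n) (X i ω) a * Vvec (h n) (X i ω) b) -
          f 0 * kappa K a b|}).toReal) atTop (nhds 0)) := by
  obtain ⟨C, hC⟩ := hKcont.bounded_above_of_compact_support
    (HasCompactSupport.intro isCompact_Icc hKsupp)
  have hwm := measurable_weightedKernel hKcont.measurable
  have hwC : ∀ s p u, |weightedKernel K s p u| ≤ C :=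
    fun s p u => (abs_weightedKernel_le hKsupp s p u).trans (hC u)
  have hw0 := weightedKernel_eq_zero hKsupp
  have hwi : ∀ s p, Integrable (weightedKernel K s p) := fun s p =>
    integrable_of_abs_le_of_eq_zero_outside (s := Set.Icc (-1) 1) (by simp)
      (hwm s p).aestronglyMeasurable (hwC s p) (hw0 s p)
  simp only [Kh_mul_Vvec_mul_Vvec K (hhpos _), kappa_apply, kmatM1_apply, kmatM2_apply]
  refine ⟨fun a b => ?_, fun a b => ?_, fun a b δ hδ => ?_⟩
  · exact isLittleO_integral_Kh_comp_sub (hXmeas 0) hfmeas hfnonneg hdens hε hf (hwm _ _)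
      (hwi _ _) (hw0 _ _) hhpos hh0
  · exact variance_mean_Kh_comp_isBigO hXmeas hindep hident hfmeas hfnonneg hdens hε hf
      (hwm _ _) (hwC _ _) (hw0 _ _) hhpos hh0
  · exact tendsto_measure_lt_abs_mean_Kh_comp_sub hXmeas hindep hident hfmeas hfnonneg hdens hε
      hf (hwm _ _) (hwC _ _) (hw0 _ _) hhpos hh0 hnh hδ

/-- second-order expansion of `E(K_h(X₁)V₁V₁ᵀ)` and entrywise
concentration of its empirical counterpart. -/
theorem kernel_design_matrix_expansion
    {Ω : Type*} [MeasurableSpace Ω] (P : Measure Ω) [IsProbabilityMeasure P]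
    (X : ℕ → Ω → ℝ) (hXmeas : ∀ i, Measurable (X i))
    (hindep : iIndepFun X P)
    (hident : ∀ i, Measure.map (X i) P = Measure.map (X 0) P)
    -- density of X, twice continuously differentiable near 0
    (f : ℝ → ℝ) (hfmeas : Measurable f) (hfnonneg : ∀ x, 0 ≤ f x)
    (hdens : Measure.map (X 0) P = volume.withDensity fun x => ENNReal.ofReal (f x))
    (ε : ℝ) (hε : 0 < ε) (hf : ContDiffOn ℝ 2 f (Metric.ball (0 : ℝ) ε))
    -- kernel: continuous, symmetric, supported in [−1,1], integrating to one
    (K : ℝ → ℝ) (hKcont : Continuous K) (hKnonneg : ∀ u, 0 ≤ K u)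
    (hKsymm : ∀ u, K (-u) = K u)
    (hKsupp : ∀ u : ℝ, u ∉ Set.Icc (-1 : ℝ) 1 → K u = 0)
    (hKone : (∫ u, K u) = 1)
    -- bandwidth
    (h : ℕ → ℝ) (hhpos : ∀ n, 0 < h n)
    (hh0 : Tendsto h atTop (nhds 0))
    (hnh : Tendsto (fun n : ℕ => (n : ℝ) * h n) atTop atTop) :
    -- (i) second-order expansion of the expected kernel-weighted design matrix
    (∀ a b : Fin 4,
      (fun n => (∫ ω, Kh K (h n) (X 0 ω) * Vvec (h n) (X 0 ω) a *
            Vvec (h n) (X 0 ω) b ∂P) -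
          (f 0 * kappa K a b + h n * deriv f 0 * kmatM1 K a b +
            (h n) ^ 2 / 2 * deriv (deriv f) 0 * kmatM2 K a b)) =o[atTop]
        (fun n => (h n) ^ 2)) ∧
    -- (ii) each entry of the centered empirical matrix has variance O(1/(nh)) ...
    (∀ a b : Fin 4,
      (fun n : ℕ => variance (fun ω => (1 / (n : ℝ)) * ∑ i ∈ Finset.range n,
          Kh K (h n) (X i ω) * Vvec (h n) (X i ω) a * Vvec (h n) (X i ω) b) P)
        =O[atTop] (fun n : ℕ => 1 / ((n : ℝ) * h n))) ∧
    -- ... and in particular the empirical matrix converges entrywise in probability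
    (∀ a b : Fin 4, ∀ δ > (0 : ℝ),
      Tendsto (fun n : ℕ => (P {ω | δ < |(1 / (n : ℝ)) * (∑ i ∈ Finset.range n,
          Kh K (h n) (X i ω) * Vvec (h n) (X i ω) a * Vvec (h n) (X i ω) b) -
          f 0 * kappa K a b|}).toReal) atTop (nhds 0)) :=
  kernel_design_matrix_expansion_general P X hXmeas hindep hident f hfmeas hfnonneg hdens ε hε hf K
    hKcont hKsupp h hhpos hh0 hnh

end
end
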